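/- Let l be an even positive integer and let F be the matching consisting of l/2 pairwise disjoint edges (a perfect matching of the path P_l on l vertices). Then for all n and e, ex(n,e,P_l,K_3) ≤ (l/2)! · ex(n,e,F,K_3). In particular, every triangle-free graph G with n vertices and e edges satisfies N(P_l,G) ≤ (l/2)! · N(F,G). -/

import Mathlib

open Filter Finset SimpleGraph

/-- `N(H,G)`: the number of subgraphs of `G` isomorphic to `H`. -/
noncomputable def subgraphCopyCount {α β : Type*} (H : SimpleGraph α) (G : SimpleGraph β) : ℕ :=
  {G' : G.Subgraph | Nonempty (H ≃g G'.coe)}.ncard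

/-- The star with `k` leaves, `K_{1,k}`, with center `0`. -/
def starGraph (k : ℕ) : SimpleGraph (Fin (k + 1)) where
  Adj i j := i ≠ j ∧ (i = 0 ∨ j = 0)
  symm := by constructor; intro i j h; exact ⟨h.1.symm, h.2.symm⟩
  loopless := by constructor; intro i h; exact h.1 rfl

/-- The matching with `m` pairwise disjoint edges. -/
def matchingGraph (m : ℕ) : SimpleGraph (Fin m × Fin 2) where
  Adj a b := a.1 = b.1 ∧ a.2 ≠ b.2
  symm := by constructor; intro a b h; exact ⟨h.1.symm, h.2.symm⟩
  loopless := by constructor; intro a h; exact h.2 rfl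

/-- `v_e`: the largest `v` with `C(v,2) ≤ e`. -/
def vE (e : ℕ) : ℕ := Nat.findGreatest (fun v => v.choose 2 ≤ e) (e + 1)

/-- The quasi-clique `K^e_n`: writing `e = C(a,2) + b` with `0 ≤ b < a`, it consists of a
clique on the first `a` vertices, one further vertex joined to `b` vertices of the clique,
and all remaining vertices isolated. -/
def quasiClique (n e : ℕ) : SimpleGraph (Fin n) where
  Adj i j := i ≠ j ∧ ((i.val < vE e ∧ j.val < vE e) ∨
    (i.val = vE e ∧ j.val < e - Nat.choose (vE e) 2) ∨
    (j.val = vE e ∧ i.val < e - Nat.choose (vE e) 2))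
  symm := by constructor; intro i j h; exact ⟨h.1.symm, by tauto⟩
  loopless := by constructor; intro i h; exact h.1 rfl

/-- `t`: the smallest positive integer `i` with `i * (n - i) ≥ e`. -/
noncomputable def bipT (n e : ℕ) : ℕ := sInf {i : ℕ | 0 < i ∧ e ≤ i * (n - i)}

/-- The quasi-complete bipartite graph `B^e_n`: obtained from the complete bipartite graph
`K_{t, n-t}` (parts `{0, …, t-1}` and `{t, …, n-1}`) by deleting `t*(n-t) - e` edges
incident to the vertex `0` of degree `n - t`. -/
noncomputable def quasiBip (n e : ℕ) : SimpleGraph (Fin n) where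
  Adj i j :=
    (i.val < bipT n e ∧ bipT n e ≤ j.val ∧
      (0 < i.val ∨ j.val < n - (bipT n e * (n - bipT n e) - e))) ∨
    (j.val < bipT n e ∧ bipT n e ≤ i.val ∧
      (0 < j.val ∨ i.val < n - (bipT n e * (n - bipT n e) - e)))
  symm := by constructor; intro i j h; tauto
  loopless := by constructor; intro i h; rcases h with ⟨h1, h2, -⟩ | ⟨h1, h2, -⟩ <;> omega

/-- `ex(n,e,H)`: the maximum number of copies of `H` in a graph with `n` vertices and
`e` edges. -/
noncomputable def exCount {α : Type*} (n e : ℕ) (H : SimpleGraph α) : ℕ :=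
  sSup {N | ∃ G : SimpleGraph (Fin n), G.edgeSet.ncard = e ∧ subgraphCopyCount H G = N}

/-- `ex_bip(n,e,H)`: the maximum number of copies of `H` in a bipartite graph with
`n` vertices and `e` edges. -/
noncomputable def exBip {α : Type*} (n e : ℕ) (H : SimpleGraph α) : ℕ :=
  sSup {N | ∃ G : SimpleGraph (Fin n),
    G.Colorable 2 ∧ G.edgeSet.ncard = e ∧ subgraphCopyCount H G = N}

/-- `ex(n,e,H,K₃)`: the maximum number of copies of `H` in a triangle-free graph with
`n` vertices and `e` edges. -/
noncomputable def exTriFree {α : Type*} (n e : ℕ) (H : SimpleGraph α) : ℕ :=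
  sSup {N | ∃ G : SimpleGraph (Fin n),
    G.CliqueFree 3 ∧ G.edgeSet.ncard = e ∧ subgraphCopyCount H G = N}

namespace Stmt7Aux

variable {V : Type*} {G : SimpleGraph V}

lemma subgraph_inj (G : SimpleGraph V) :
    Function.Injective (fun G' : G.Subgraph => (G'.verts, {p : V × V | G'.Adj p.1 p.2})) := by
  intro A B h
  simp only [Prod.mk.injEq] at h
  refine SimpleGraph.Subgraph.ext h.1 ?_
  funext x y
  exact propext ⟨fun hxy => (Set.ext_iff.mp h.2 (x, y)).mp hxy,
    fun hxy => (Set.ext_iff.mp h.2 (x, y)).mpr hxy⟩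

lemma subgraph_finite [Finite V] (G : SimpleGraph V) : Finite G.Subgraph :=
  Finite.of_injective _ (subgraph_inj G)

lemma copyCount_eq_natCard {α : Type*} (H : SimpleGraph α) (G : SimpleGraph V) :
    subgraphCopyCount H G = Nat.card {G' : G.Subgraph | Nonempty (H ≃g G'.coe)} := by
  rw [subgraphCopyCount, ← Nat.card_coe_set_eq]

lemma copyCount_le_bound {α : Type*} [Finite V] (H : SimpleGraph α) (G : SimpleGraph V) :
    subgraphCopyCount H G ≤ Nat.card (Set V × Set (V × V)) := by
  have : Finite G.Subgraph := subgraph_finite G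
  rw [copyCount_eq_natCard]
  calc Nat.card {G' : G.Subgraph | Nonempty (H ≃g G'.coe)}
      ≤ Nat.card G.Subgraph := Nat.card_le_card_of_injective Subtype.val Subtype.val_injective
    _ ≤ _ := Nat.card_le_card_of_injective _ (subgraph_inj G)




lemma path_extract {l : ℕ} (hl : 0 < l) {G' : G.Subgraph} (φ : pathGraph l ≃g G'.coe) :
    ∃ q : ℕ → V,
      (∀ i j, i < l → j < l → q i = q j → i = j) ∧
      (∀ i, i + 1 < l → G.Adj (q i) (q (i + 1))) ∧
      (G'.verts = {x | ∃ k, k < l ∧ q k = x}) ∧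
      (∀ x y, G'.Adj x y ↔ ∃ i, i + 1 < l ∧
        ((x = q i ∧ y = q (i + 1)) ∨ (x = q (i + 1) ∧ y = q i))) := by
  refine ⟨fun k => if h : k < l then (φ ⟨k, h⟩ : V) else (φ ⟨0, hl⟩ : V), ?_, ?_, ?_, ?_⟩
  · intro i j hi hj hij
    simp only [dif_pos hi, dif_pos hj] at hij
    have := φ.toEquiv.injective (Subtype.val_injective hij)
    simpa [Fin.ext_iff] using this
  · intro i hi
    have h1 : i < l := by omega
    simp only [dif_pos h1, dif_pos hi]
    have hadj : (pathGraph l).Adj ⟨i, h1⟩ ⟨i + 1, hi⟩ := by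
      rw [pathGraph_adj]; left; rfl
    have := φ.map_adj_iff.mpr hadj
    rw [SimpleGraph.Subgraph.coe_adj] at this
    exact this.adj_sub
  · ext x
    constructor
    · intro hx
      obtain ⟨a, ha⟩ := φ.toEquiv.surjective ⟨x, hx⟩
      have ha' : (φ a : V) = x := congrArg Subtype.val ha
      exact ⟨a.val, a.isLt, by simp only [dif_pos a.isLt, Fin.eta]; exact ha'⟩
    · rintro ⟨k, hk, rfl⟩
      simp only [dif_pos hk]
      exact (φ ⟨k, hk⟩).2
  · intro x y
    constructor
    · intro hxy
      have hx : x ∈ G'.verts := G'.edge_vert hxy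
      have hy : y ∈ G'.verts := G'.edge_vert hxy.symm
      obtain ⟨a, ha⟩ := φ.toEquiv.surjective ⟨x, hx⟩
      obtain ⟨b, hb⟩ := φ.toEquiv.surjective ⟨y, hy⟩
      have ha' : (φ a : V) = x := congrArg Subtype.val ha
      have hb' : (φ b : V) = y := congrArg Subtype.val hb
      have hcoe : G'.coe.Adj (φ a) (φ b) := by
        rw [SimpleGraph.Subgraph.coe_adj, ha', hb']; exact hxy
      have hab : (pathGraph l).Adj a b := φ.map_adj_iff.mp hcoe
      rw [pathGraph_adj] at hab
      have hxa : x = (φ a : V) := ha'.symm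
      have hyb : y = (φ b : V) := hb'.symm
      rcases hab with h | h
      · refine ⟨a.val, by omega, Or.inl ⟨?_, ?_⟩⟩
        · simp only [dif_pos a.isLt, Fin.eta]; exact hxa
        · have hb1 : a.val + 1 < l := by omega
          simp only [dif_pos hb1]
          rw [hyb]; congr 1
          apply congrArg
          apply Fin.ext; simp only [Fin.val_mk]; omega
      · refine ⟨b.val, by omega, Or.inr ⟨?_, ?_⟩⟩
        · have ha1 : b.val + 1 < l := by omega
          simp only [dif_pos ha1]
          rw [hxa]; congr 1
          apply congrArg
          apply Fin.ext; simp only [Fin.val_mk]; omega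
        · simp only [dif_pos b.isLt, Fin.eta]; exact hyb
    · rintro ⟨i, hi, h⟩
      have h1 : i < l := by omega
      have hadj : (pathGraph l).Adj ⟨i, h1⟩ ⟨i + 1, hi⟩ := by
        rw [pathGraph_adj]; left; rfl
      have hcoe := φ.map_adj_iff.mpr hadj
      rw [SimpleGraph.Subgraph.coe_adj] at hcoe
      rcases h with ⟨rfl, rfl⟩ | ⟨rfl, rfl⟩
      · simpa only [dif_pos h1, dif_pos hi] using hcoe
      · simpa only [dif_pos h1, dif_pos hi] using hcoe.symm




lemma match_extract {m : ℕ} (hm : 0 < m) {M : G.Subgraph} (ψ : matchingGraph m ≃g M.coe) :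
    ∃ h : ℕ → V,
      (∀ i j, i < 2 * m → j < 2 * m → h i = h j → i = j) ∧
      (M.verts = {x | ∃ k, k < 2 * m ∧ h k = x}) ∧
      (∀ x y, M.Adj x y ↔ ∃ j, j < m ∧
        ((x = h (2 * j) ∧ y = h (2 * j + 1)) ∨ (x = h (2 * j + 1) ∧ y = h (2 * j)))) := by
  set f : ℕ → V := fun k =>
    if hk : k < 2 * m then (ψ (⟨k / 2, by omega⟩, ⟨k % 2, by omega⟩) : V)
    else (ψ (⟨0, hm⟩, 0) : V) with hf
  have key : ∀ k (hk : k < 2 * m), f k = (ψ (⟨k / 2, by omega⟩, ⟨k % 2, by omega⟩) : V) := by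
    intro k hk; simp only [hf, dif_pos hk]
  have key2 : ∀ (j b : ℕ) (hj : j < m) (hb : b < 2),
      f (2 * j + b) = (ψ (⟨j, hj⟩, ⟨b, hb⟩) : V) := by
    intro j b hj hb
    rw [key _ (by omega)]
    have hp : ((⟨(2 * j + b) / 2, by omega⟩ : Fin m), (⟨(2 * j + b) % 2, by omega⟩ : Fin 2))
        = ((⟨j, hj⟩ : Fin m), (⟨b, hb⟩ : Fin 2)) := by
      simp only [Prod.mk.injEq, Fin.mk.injEq]
      omega
    exact congrArg (fun p => (ψ p : V)) hp
  have key3 : ∀ (a : Fin m) (b : Fin 2), f (2 * a.val + b.val) = (ψ (a, b) : V) := by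
    intro a b
    rw [key2 a.val b.val a.isLt b.isLt]
  refine ⟨f, ?_, ?_, ?_⟩
  · intro i j hi hj hij
    rw [key i hi, key j hj] at hij
    have := ψ.toEquiv.injective (Subtype.val_injective hij)
    simp only [Prod.mk.injEq, Fin.mk.injEq] at this
    omega
  · ext x
    constructor
    · intro hx
      obtain ⟨⟨a, b⟩, hab⟩ := ψ.toEquiv.surjective ⟨x, hx⟩
      have hab' : (ψ (a, b) : V) = x := congrArg Subtype.val hab
      exact ⟨2 * a.val + b.val, by omega, by rw [key3]; exact hab'⟩
    · rintro ⟨k, hk, rfl⟩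
      rw [key k hk]
      exact (ψ _).2
  · intro x y
    constructor
    · intro hxy
      have hx : x ∈ M.verts := M.edge_vert hxy
      have hy : y ∈ M.verts := M.edge_vert hxy.symm
      obtain ⟨⟨a, b⟩, hab⟩ := ψ.toEquiv.surjective ⟨x, hx⟩
      obtain ⟨⟨c, d⟩, hcd⟩ := ψ.toEquiv.surjective ⟨y, hy⟩
      have hab' : (ψ (a, b) : V) = x := congrArg Subtype.val hab
      have hcd' : (ψ (c, d) : V) = y := congrArg Subtype.val hcd
      have hcoe : M.coe.Adj (ψ (a, b)) (ψ (c, d)) := by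
        rw [SimpleGraph.Subgraph.coe_adj, hab', hcd']; exact hxy
      obtain ⟨hac, hbd⟩ := ψ.map_adj_iff.mp hcoe
      simp only at hac hbd
      have hbd' : b.val ≠ d.val := fun h => hbd (Fin.ext h)
      have hca : c.val = a.val := congrArg Fin.val hac.symm
      refine ⟨a.val, a.isLt, ?_⟩
      have hxf : x = f (2 * a.val + b.val) := by rw [key3]; exact hab'.symm
      have hyf : y = f (2 * a.val + d.val) := by
        rw [show 2 * a.val + d.val = 2 * c.val + d.val by omega, key3]; exact hcd'.symm
      have hb2 : b.val < 2 := b.isLt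
      have hd2 : d.val < 2 := d.isLt
      rcases (by omega : b.val = 0 ∨ b.val = 1) with hb0 | hb1
      · left
        refine ⟨?_, ?_⟩
        · rw [hxf]; exact congrArg f (by omega)
        · rw [hyf]; exact congrArg f (by omega)
      · right
        refine ⟨?_, ?_⟩
        · rw [hxf]; exact congrArg f (by omega)
        · rw [hyf]; exact congrArg f (by omega)
    · rintro ⟨j, hj, h⟩
      have hadj : (matchingGraph m).Adj (⟨j, hj⟩, 0) (⟨j, hj⟩, 1) := by
        refine ⟨rfl, fun hcon => ?_⟩
        simpa using congrArg Fin.val hcon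
      have hcoe := ψ.map_adj_iff.mpr hadj
      rw [SimpleGraph.Subgraph.coe_adj] at hcoe
      have e0 : f (2 * j) = (ψ (⟨j, hj⟩, 0) : V) := by
        rw [show 2 * j = 2 * j + 0 by omega, key2 j 0 hj (by omega)]
        rfl
      have e1 : f (2 * j + 1) = (ψ (⟨j, hj⟩, 1) : V) := by
        rw [key2 j 1 hj (by omega)]
        rfl
      rcases h with ⟨rfl, rfl⟩ | ⟨rfl, rfl⟩
      · rw [e0, e1]; exact hcoe
      · rw [e0, e1]; exact hcoe.symm




lemma match_insert {m : ℕ} (hm : 0 < m) (q : ℕ → V)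
    (hinj : ∀ i j, i < 2 * m → j < 2 * m → q i = q j → i = j)
    (hadj : ∀ i, i + 1 < 2 * m → G.Adj (q i) (q (i + 1))) :
    ∃ M : G.Subgraph, Nonempty (matchingGraph m ≃g M.coe) ∧
      (M.verts = {x | ∃ k, k < 2 * m ∧ q k = x}) ∧
      (∀ x y, M.Adj x y ↔ ∃ j, j < m ∧
        ((x = q (2 * j) ∧ y = q (2 * j + 1)) ∨ (x = q (2 * j + 1) ∧ y = q (2 * j)))) := by
  set M : G.Subgraph :=
    { verts := {x | ∃ k, k < 2 * m ∧ q k = x}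
      Adj := fun x y => ∃ j, j < m ∧
        ((x = q (2 * j) ∧ y = q (2 * j + 1)) ∨ (x = q (2 * j + 1) ∧ y = q (2 * j)))
      adj_sub := by
        rintro x y ⟨j, hj, ⟨rfl, rfl⟩ | ⟨rfl, rfl⟩⟩
        · exact hadj (2 * j) (by omega)
        · exact (hadj (2 * j) (by omega)).symm
      edge_vert := by
        rintro x y ⟨j, hj, ⟨rfl, rfl⟩ | ⟨rfl, rfl⟩⟩
        · exact ⟨2 * j, by omega, rfl⟩
        · exact ⟨2 * j + 1, by omega, rfl⟩
      symm := by
        constructor; rintro x y ⟨j, hj, ⟨rfl, rfl⟩ | ⟨rfl, rfl⟩⟩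
        · exact ⟨j, hj, Or.inr ⟨rfl, rfl⟩⟩
        · exact ⟨j, hj, Or.inl ⟨rfl, rfl⟩⟩ } with hM
  refine ⟨M, ⟨?_⟩, rfl, fun x y => Iff.rfl⟩
  have hg : ∀ p : Fin m × Fin 2, q (2 * p.1.val + p.2.val) ∈ M.verts := by
    rintro ⟨a, b⟩
    exact ⟨2 * a.val + b.val, by have := a.isLt; have := b.isLt; omega, rfl⟩
  have hginj : Function.Injective (fun p : Fin m × Fin 2 =>
      (⟨q (2 * p.1.val + p.2.val), hg p⟩ : M.verts)) := by
    rintro ⟨a, b⟩ ⟨c, d⟩ hpq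
    have := hinj _ _ (by have := a.isLt; have := b.isLt; omega)
      (by have := c.isLt; have := d.isLt; omega) (congrArg Subtype.val hpq)
    have hb := b.isLt; have hd := d.isLt
    dsimp only at this
    simp only [Prod.mk.injEq, Fin.ext_iff]
    omega
  have hgsurj : Function.Surjective (fun p : Fin m × Fin 2 =>
      (⟨q (2 * p.1.val + p.2.val), hg p⟩ : M.verts)) := by
    rintro ⟨x, ⟨k, hk, rfl⟩⟩
    refine ⟨(⟨k / 2, by omega⟩, ⟨k % 2, by omega⟩), ?_⟩
    apply Subtype.ext
    exact congrArg q (by simp only [Fin.val_mk]; omega)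
  refine ⟨Equiv.ofBijective _ ⟨hginj, hgsurj⟩, ?_⟩
  rintro ⟨a, b⟩ ⟨c, d⟩
  simp only [Equiv.ofBijective_apply, SimpleGraph.Subgraph.coe_adj]
  show _ ↔ (a = c ∧ b ≠ d)
  constructor
  · rintro ⟨j, hj, ⟨h1, h2⟩ | ⟨h1, h2⟩⟩
    · have e1 := hinj _ _ (by have := a.isLt; have := b.isLt; omega) (by omega) h1
      have e2 := hinj _ _ (by have := c.isLt; have := d.isLt; omega) (by omega) h2
      have hb := b.isLt; have hd := d.isLt
      dsimp only at e1 e2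
      exact ⟨Fin.ext (by omega), fun hcon => by
        have hcv := congrArg Fin.val hcon; omega⟩
    · have e1 := hinj _ _ (by have := a.isLt; have := b.isLt; omega) (by omega) h1
      have e2 := hinj _ _ (by have := c.isLt; have := d.isLt; omega) (by omega) h2
      have hb := b.isLt; have hd := d.isLt
      dsimp only at e1 e2
      exact ⟨Fin.ext (by omega), fun hcon => by
        have hcv := congrArg Fin.val hcon; omega⟩
  · rintro ⟨hac, hbd⟩
    have hca : a.val = c.val := congrArg Fin.val hac
    have hbd' : b.val ≠ d.val := fun h => hbd (Fin.ext h)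
    have hb := b.isLt; have hd := d.isLt
    refine ⟨a.val, a.isLt, ?_⟩
    rcases (by omega : b.val = 0 ∧ d.val = 1 ∨ b.val = 1 ∧ d.val = 0) with ⟨hb0, hd1⟩ | ⟨hb1, hd0⟩
    · exact Or.inl ⟨congrArg q (by dsimp only; omega), congrArg q (by dsimp only; omega)⟩
    · exact Or.inr ⟨congrArg q (by dsimp only; omega), congrArg q (by dsimp only; omega)⟩




lemma force (hG : G.CliqueFree 3) {m : ℕ} (q₁ q₂ : ℕ → V)
    (hinj₁ : ∀ i j, i < 2 * m → j < 2 * m → q₁ i = q₁ j → i = j)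
    (hinj₂ : ∀ i j, i < 2 * m → j < 2 * m → q₂ i = q₂ j → i = j)
    (hadj₁ : ∀ i, i + 1 < 2 * m → G.Adj (q₁ i) (q₁ (i + 1)))
    (hadj₂ : ∀ i, i + 1 < 2 * m → G.Adj (q₂ i) (q₂ (i + 1)))
    (hpair : ∀ j, j < m →
      (q₁ (2 * j) = q₂ (2 * j) ∧ q₁ (2 * j + 1) = q₂ (2 * j + 1)) ∨
      (q₁ (2 * j) = q₂ (2 * j + 1) ∧ q₁ (2 * j + 1) = q₂ (2 * j)))
    (h0 : q₁ 0 = q₂ 0) :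
    ∀ k, k < 2 * m → q₁ k = q₂ k := by
  have main : ∀ j, j < m → q₁ (2 * j) = q₂ (2 * j) ∧ q₁ (2 * j + 1) = q₂ (2 * j + 1) := by
    intro j
    induction j with
    | zero =>
      intro hj
      rcases hpair 0 hj with h | ⟨hc1, hc2⟩
      · simpa using h
      · exfalso
        have : q₂ 0 = q₂ 1 := by
          rw [← h0]
          simpa using hc1
        have := hinj₂ 0 1 (by omega) (by omega) this
        omega
    | succ j ih =>
      intro hj
      have hprev := (ih (by omega)).2
      rcases hpair (j + 1) hj with h | ⟨hc1, hc2⟩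
      · exact h
      · exfalso
        classical
        -- triangle q₁(2j+1), q₁(2j+2), q₁(2j+3)
        have ha1 : G.Adj (q₁ (2 * j + 1)) (q₁ (2 * j + 2)) := hadj₁ (2 * j + 1) (by omega)
        have ha2 : G.Adj (q₁ (2 * j + 2)) (q₁ (2 * j + 3)) := hadj₁ (2 * j + 2) (by omega)
        have ha3 : G.Adj (q₁ (2 * j + 1)) (q₁ (2 * j + 3)) := by
          have e1 : q₁ (2 * j + 1) = q₂ (2 * j + 1) := hprev
          have e2 : q₁ (2 * j + 3) = q₂ (2 * j + 2) := by
            have := hc2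
            rw [show 2 * (j + 1) + 1 = 2 * j + 3 by omega, show 2 * (j + 1) = 2 * j + 2
              by omega] at this
            exact this
          rw [e1, e2]
          exact hadj₂ (2 * j + 1) (by omega)
        exact hG {q₁ (2 * j + 1), q₁ (2 * j + 2), q₁ (2 * j + 3)}
          (SimpleGraph.is3Clique_triple_iff.mpr ⟨ha1, ha3, ha2⟩)
  intro k hk
  rcases (by omega : k % 2 = 0 ∨ k % 2 = 1) with h2 | h2
  · have := (main (k / 2) (by omega)).1
    rwa [show 2 * (k / 2) = k by omega] at this
  · have := (main (k / 2) (by omega)).2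
    rwa [show 2 * (k / 2) + 1 = k by omega] at this


lemma core {V : Type*} [Fintype V] (G : SimpleGraph V) (hG : G.CliqueFree 3)
    (m : ℕ) (hm : 0 < m) :
    subgraphCopyCount (pathGraph (2 * m)) G ≤ m.factorial * subgraphCopyCount (matchingGraph m) G := by
  classical
  haveI hfin : Finite G.Subgraph := subgraph_finite G
  set S : Set G.Subgraph := {G' | Nonempty (pathGraph (2 * m) ≃g G'.coe)} with hS
  set T : Set G.Subgraph := {G' | Nonempty (matchingGraph m ≃g G'.coe)} with hT
  obtain ⟨F, hF⟩ : ∃ F : S → T × Equiv.Perm (Fin m), Function.Injective F := by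
    -- extract path data
    have hqex : ∀ s : S, ∃ q : ℕ → V,
        (∀ i j, i < 2 * m → j < 2 * m → q i = q j → i = j) ∧
        (∀ i, i + 1 < 2 * m → G.Adj (q i) (q (i + 1))) ∧
        ((s : G.Subgraph).verts = {x | ∃ k, k < 2 * m ∧ q k = x}) ∧
        (∀ x y, (s : G.Subgraph).Adj x y ↔ ∃ i, i + 1 < 2 * m ∧
          ((x = q i ∧ y = q (i + 1)) ∨ (x = q (i + 1) ∧ y = q i))) :=
      fun s => path_extract (by omega) (Classical.choice s.2)
    choose q hinj hadj hverts hchar using hqex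
    -- matching subgraph for each path
    have hMex : ∀ s : S, ∃ Mt : T,
        ((Mt : G.Subgraph).verts = {x | ∃ k, k < 2 * m ∧ q s k = x}) ∧
        (∀ x y, (Mt : G.Subgraph).Adj x y ↔ ∃ j, j < m ∧
          ((x = q s (2 * j) ∧ y = q s (2 * j + 1)) ∨
            (x = q s (2 * j + 1) ∧ y = q s (2 * j)))) := by
      intro s
      obtain ⟨M, hne, hv, hc⟩ := match_insert hm (q s) (hinj s) (hadj s)
      exact ⟨⟨M, hne⟩, hv, hc⟩
    choose Mf hMverts hMchar using hMex
    -- extract matching data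
    have hhex : ∀ t : T, ∃ h : ℕ → V,
        (∀ i j, i < 2 * m → j < 2 * m → h i = h j → i = j) ∧
        ((t : G.Subgraph).verts = {x | ∃ k, k < 2 * m ∧ h k = x}) ∧
        (∀ x y, (t : G.Subgraph).Adj x y ↔ ∃ j, j < m ∧
          ((x = h (2 * j) ∧ y = h (2 * j + 1)) ∨ (x = h (2 * j + 1) ∧ y = h (2 * j)))) :=
      fun t => match_extract hm (Classical.choice t.2)
    choose h hhinj hhverts hhchar using hhex
    -- labels
    have hlink : ∀ (s : S) (i : ℕ), ∃ jb : ℕ × ℕ, i < m →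
        jb.1 < m ∧ jb.2 < 2 ∧ q s (2 * i) = h (Mf s) (2 * jb.1 + jb.2) ∧
        q s (2 * i + 1) = h (Mf s) (2 * jb.1 + 1 - jb.2) := by
      intro s i
      by_cases hi : i < m
      · have hMadj : (Mf s : G.Subgraph).Adj (q s (2 * i)) (q s (2 * i + 1)) :=
          (hMchar s _ _).mpr ⟨i, hi, Or.inl ⟨rfl, rfl⟩⟩
        obtain ⟨j, hj, hor⟩ := (hhchar (Mf s) _ _).mp hMadj
        rcases hor with ⟨h1, h2⟩ | ⟨h1, h2⟩
        · refine ⟨(j, 0), fun _ => ⟨hj, by omega, ?_, ?_⟩⟩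
          · exact h1.trans (congrArg (h (Mf s)) (by omega))
          · exact h2.trans (congrArg (h (Mf s)) (by omega))
        · refine ⟨(j, 1), fun _ => ⟨hj, by omega, ?_, ?_⟩⟩
          · exact h1.trans (congrArg (h (Mf s)) (by omega))
          · exact h2.trans (congrArg (h (Mf s)) (by omega))
      · exact ⟨(0, 0), fun hcon => absurd hcon hi⟩
    choose τβ hτβ using hlink
    -- permutations
    have hperm : ∀ s : S, ∃ π : Equiv.Perm (Fin m),
        ∀ i : Fin m, (π i).val = (τβ s i.val).1 := by
      intro s
      have hto : ∀ i : Fin m, (τβ s i.val).1 < m := fun i => (hτβ s i.val i.isLt).1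
      have hginj : Function.Injective (fun i : Fin m => (⟨(τβ s i.val).1, hto i⟩ : Fin m)) := by
        intro i i' hii
        have hv : (τβ s i.val).1 = (τβ s i'.val).1 := congrArg Fin.val hii
        obtain ⟨hj1, hb1, he1, he2⟩ := hτβ s i.val i.isLt
        obtain ⟨hj1', hb1', he1', he2'⟩ := hτβ s i'.val i'.isLt
        by_cases hbb : (τβ s i.val).2 = (τβ s i'.val).2
        · have heq : q s (2 * i.val) = q s (2 * i'.val) := by
            rw [he1, he1', hv, hbb]
          have := hinj s _ _ (by have := i.isLt; omega) (by have := i'.isLt; omega) heq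
          exact Fin.ext (by omega)
        · have harg : 2 * (τβ s i.val).1 + (τβ s i.val).2 =
              2 * (τβ s i'.val).1 + 1 - (τβ s i'.val).2 := by omega
          have heq : q s (2 * i.val) = q s (2 * i'.val + 1) := by
            rw [he1, harg, ← he2']
          have := hinj s _ _ (by have := i.isLt; omega) (by have := i'.isLt; omega) heq
          exact Fin.ext (by omega)
      exact ⟨Equiv.ofBijective _ ((Finite.injective_iff_bijective).mp hginj),
        fun i => rfl⟩
    choose π hπ using hperm
    -- encoding of permutations
    obtain ⟨enc, henc⟩ : ∃ enc : Equiv.Perm (Fin m) → ℕ, Function.Injective enc :=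
      ⟨fun p => (Fintype.equivFin (Equiv.Perm (Fin m)) p : ℕ),
       fun a b hab => (Fintype.equivFin _).injective (Fin.ext hab)⟩
    set rv : Equiv.Perm (Fin m) := ⟨Fin.rev, Fin.rev, Fin.rev_rev, Fin.rev_rev⟩ with hrv
    have hrv2 : ∀ p : Equiv.Perm (Fin m), p * rv * rv = p := by
      intro p; ext i
      simp only [Equiv.Perm.mul_apply, hrv, Equiv.coe_fn_mk, Fin.rev_rev]
    set can : Equiv.Perm (Fin m) → Equiv.Perm (Fin m) :=
      fun p => if enc (p * rv) < enc p then p * rv else p with hcan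
    have hcan_mem : ∀ p, can p = p ∨ can p = p * rv := by
      intro p; by_cases hc : enc (p * rv) < enc p
      · right; simp only [hcan, if_pos hc]
      · left; simp only [hcan, if_neg hc]
    have hcan_rv : ∀ p, can (p * rv) = can p := by
      intro p
      by_cases hc : enc (p * rv) < enc p
      · have h2 : ¬ enc ((p * rv) * rv) < enc (p * rv) := by rw [hrv2]; omega
        simp only [hcan, if_pos hc, if_neg h2]
      · by_cases he : enc (p * rv) = enc p
        · rw [henc he]
        · have h2 : enc ((p * rv) * rv) < enc (p * rv) := by rw [hrv2]; omega
          simp only [hcan, if_pos h2, if_neg hc, hrv2]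
    have hcan_idem : ∀ p, can (can p) = can p := by
      intro p; rcases hcan_mem p with hcm | hcm
      · rw [hcm]; exact hcm
      · rw [hcm, hcan_rv]; exact hcm
    -- bit, output, sv, gg
    set bitf : S → ℕ :=
      fun s => if π s = can (π s) then (τβ s 0).2 else 1 - (τβ s (m - 1)).2 with hbitf
    set out : S → Equiv.Perm (Fin m) :=
      fun s => if bitf s = 0 then can (π s) else can (π s) * rv with hout
    set sv : S → ℕ → ℕ :=
      fun s i => if hi : i < m then ((can (π s)) ⟨i, hi⟩).val else 0 with hsv
    set gg : S → ℕ → V :=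
      fun s k => if π s = can (π s) then q s k else q s (2 * m - 1 - k) with hgg
    -- basic facts about gg
    have gginj : ∀ s : S, ∀ i j, i < 2 * m → j < 2 * m → gg s i = gg s j → i = j := by
      intro s i j hi hj hij
      simp only [hgg] at hij
      by_cases hc : π s = can (π s)
      · rw [if_pos hc, if_pos hc] at hij
        exact hinj s i j hi hj hij
      · rw [if_neg hc, if_neg hc] at hij
        have := hinj s _ _ (by omega) (by omega) hij
        omega
    have ggadj : ∀ s : S, ∀ i, i + 1 < 2 * m → G.Adj (gg s i) (gg s (i + 1)) := by
      intro s i hi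
      simp only [hgg]
      by_cases hc : π s = can (π s)
      · rw [if_pos hc, if_pos hc]; exact hadj s i hi
      · rw [if_neg hc, if_neg hc]
        have := hadj s (2 * m - 2 - i) (by omega)
        rw [show 2 * m - 2 - i + 1 = 2 * m - 1 - i by omega] at this
        rw [show 2 * m - 1 - (i + 1) = 2 * m - 2 - i by omega]
        exact this.symm
    have ggverts : ∀ s : S,
        {x | ∃ k, k < 2 * m ∧ gg s k = x} = {x | ∃ k, k < 2 * m ∧ q s k = x} := by
      intro s
      simp only [hgg]
      by_cases hc : π s = can (π s)
      · simp only [if_pos hc]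
      · simp only [if_neg hc]
        ext x
        constructor
        · rintro ⟨k, hk, rfl⟩; exact ⟨2 * m - 1 - k, by omega, rfl⟩
        · rintro ⟨k, hk, rfl⟩
          exact ⟨2 * m - 1 - k, by omega, congrArg (q s) (by omega)⟩
    have ggchar : ∀ (s : S) (x y : V), (s : G.Subgraph).Adj x y ↔
        ∃ i, i + 1 < 2 * m ∧
          ((x = gg s i ∧ y = gg s (i + 1)) ∨ (x = gg s (i + 1) ∧ y = gg s i)) := by
      intro s x y
      rw [hchar s x y]
      simp only [hgg]
      by_cases hc : π s = can (π s)
      · simp only [if_pos hc]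
      · simp only [if_neg hc]
        constructor
        · rintro ⟨i, hi, hp⟩
          refine ⟨2 * m - 2 - i, by omega, ?_⟩
          have e1 : q s i = q s (2 * m - 1 - (2 * m - 2 - i + 1)) := congrArg (q s) (by omega)
          have e2 : q s (i + 1) = q s (2 * m - 1 - (2 * m - 2 - i)) := congrArg (q s) (by omega)
          rcases hp with ⟨rfl, rfl⟩ | ⟨rfl, rfl⟩
          · exact Or.inr ⟨e1, e2⟩
          · exact Or.inl ⟨e2, e1⟩
        · rintro ⟨i, hi, hp⟩
          refine ⟨2 * m - 2 - i, by omega, ?_⟩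
          have e1 : q s (2 * m - 1 - i) = q s (2 * m - 2 - i + 1) := congrArg (q s) (by omega)
          have e2 : q s (2 * m - 1 - (i + 1)) = q s (2 * m - 2 - i) := congrArg (q s) (by omega)
          rcases hp with ⟨rfl, rfl⟩ | ⟨rfl, rfl⟩
          · exact Or.inr ⟨e1, e2⟩
          · exact Or.inl ⟨e2, e1⟩
    -- claim A
    have claimA : ∀ (s : S) (i : ℕ), i < m → ∃ bb, bb < 2 ∧ (i = 0 → bb = bitf s) ∧
        gg s (2 * i) = h (Mf s) (2 * sv s i + bb) ∧
        gg s (2 * i + 1) = h (Mf s) (2 * sv s i + 1 - bb) := by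
      intro s i hi
      by_cases hc : π s = can (π s)
      · refine ⟨(τβ s i).2, (hτβ s i hi).2.1, fun h0 => by
          simp only [hbitf, if_pos hc, h0], ?_, ?_⟩
        · have hsv_eq : sv s i = (τβ s i).1 := by
            simp only [hsv, dif_pos hi]
            rw [← hc]
            exact hπ s ⟨i, hi⟩
          simp only [hgg, if_pos hc]
          rw [hsv_eq]
          exact (hτβ s i hi).2.2.1
        · have hsv_eq : sv s i = (τβ s i).1 := by
            simp only [hsv, dif_pos hi]
            rw [← hc]
            exact hπ s ⟨i, hi⟩
          simp only [hgg, if_pos hc]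
          rw [hsv_eq]
          exact (hτβ s i hi).2.2.2
      · have hcr : can (π s) = π s * rv := (hcan_mem (π s)).resolve_left (fun hcc => hc hcc.symm)
        have hsv_eq : sv s i = (τβ s (m - 1 - i)).1 := by
          simp only [hsv, dif_pos hi]
          rw [hcr]
          have hrvi : rv ⟨i, hi⟩ = (⟨m - 1 - i, by omega⟩ : Fin m) := by
            apply Fin.ext
            show (Fin.rev ⟨i, hi⟩).val = m - 1 - i
            rw [Fin.val_rev]
            simp only [Fin.val_mk]
            omega
          rw [Equiv.Perm.mul_apply, hrvi]
          exact hπ s ⟨m - 1 - i, by omega⟩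
        have hprev := hτβ s (m - 1 - i) (by omega)
        refine ⟨1 - (τβ s (m - 1 - i)).2, by omega, fun h0 => by
          simp only [hbitf, if_neg hc, h0, Nat.sub_zero], ?_, ?_⟩
        · simp only [hgg, if_neg hc]
          rw [show 2 * m - 1 - 2 * i = 2 * (m - 1 - i) + 1 by omega, hsv_eq]
          rw [hprev.2.2.2]
          exact congrArg (h (Mf s)) (by have := hprev.2.1; omega)
        · simp only [hgg, if_neg hc]
          rw [show 2 * m - 1 - (2 * i + 1) = 2 * (m - 1 - i) by omega, hsv_eq]
          rw [hprev.2.2.1]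
          exact congrArg (h (Mf s)) (by have := hprev.2.1; omega)
    -- the injection
    refine ⟨fun s => (Mf s, out s), ?_⟩
    intro s₁ s₂ hF12
    have hM : Mf s₁ = Mf s₂ := congrArg Prod.fst hF12
    have hMv : (Mf s₁ : G.Subgraph) = (Mf s₂ : G.Subgraph) := congrArg Subtype.val hM
    have hO : out s₁ = out s₂ := congrArg Prod.snd hF12
    have hcanout : ∀ s : S, can (out s) = can (π s) := by
      intro s
      simp only [hout]
      by_cases hb : bitf s = 0
      · rw [if_pos hb]; exact hcan_idem _
      · rw [if_neg hb, hcan_rv]; exact hcan_idem _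
    have hσ : can (π s₁) = can (π s₂) := by
      rw [← hcanout s₁, ← hcanout s₂, hO]
    have hsv12 : ∀ i, sv s₁ i = sv s₂ i := by
      intro i
      simp only [hsv]
      by_cases hi : i < m
      · simp only [dif_pos hi, hσ]
      · simp only [dif_neg hi]
    by_cases hbits : bitf s₁ = bitf s₂
    · -- main case: forcing
      have hgeq : ∀ k, k < 2 * m → gg s₁ k = gg s₂ k := by
        refine force hG (gg s₁) (gg s₂) (gginj s₁) (gginj s₂) (ggadj s₁) (ggadj s₂) ?_ ?_
        · intro j hj
          obtain ⟨b₁, hb₁, h01, e11, e12⟩ := claimA s₁ j hj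
          obtain ⟨b₂, hb₂, h02, e21, e22⟩ := claimA s₂ j hj
          rw [e11, e12, e21, e22, hsv12 j, hM]
          by_cases hbb : b₁ = b₂
          · exact Or.inl ⟨by rw [hbb], by rw [hbb]⟩
          · refine Or.inr ⟨?_, ?_⟩
            · exact congrArg (h (Mf s₂)) (by omega)
            · exact congrArg (h (Mf s₂)) (by omega)
        · obtain ⟨b₁, hb₁, h01, e11, _⟩ := claimA s₁ 0 hm
          obtain ⟨b₂, hb₂, h02, e21, _⟩ := claimA s₂ 0 hm
          have h00 : gg s₁ (2 * 0) = gg s₂ (2 * 0) := by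
            rw [e11, e21, hsv12, hM, h01 rfl, h02 rfl, hbits]
          simpa using h00
      apply Subtype.ext
      apply SimpleGraph.Subgraph.ext
      · rw [hverts s₁, hverts s₂, ← ggverts s₁, ← ggverts s₂]
        ext x
        constructor
        · rintro ⟨k, hk, rfl⟩; exact ⟨k, hk, (hgeq k hk).symm⟩
        · rintro ⟨k, hk, rfl⟩; exact ⟨k, hk, hgeq k hk⟩
      · funext x y
        apply propext
        rw [ggchar s₁ x y, ggchar s₂ x y]
        constructor
        · rintro ⟨i, hi, hp⟩
          refine ⟨i, hi, ?_⟩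
          rw [← hgeq i (by omega), ← hgeq (i + 1) hi]
          exact hp
        · rintro ⟨i, hi, hp⟩
          refine ⟨i, hi, ?_⟩
          rw [hgeq i (by omega), hgeq (i + 1) hi]
          exact hp
    · -- bits differ: m = 1
      have hb1l : bitf s₁ < 2 := by
        simp only [hbitf]
        have := (hτβ s₁ 0 hm).2.1
        split <;> omega
      have hb2l : bitf s₂ < 2 := by
        simp only [hbitf]
        have := (hτβ s₂ 0 hm).2.1
        split <;> omega
      have hrveq : rv = 1 := by
        rcases (by omega : bitf s₁ = 0 ∧ bitf s₂ ≠ 0 ∨ bitf s₁ ≠ 0 ∧ bitf s₂ = 0) with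
          ⟨hc1, hc2⟩ | ⟨hc1, hc2⟩
        · have hO' := hO
          simp only [hout, if_pos hc1, if_neg hc2] at hO'
          rw [← hσ] at hO'
          exact left_eq_mul.mp hO'
        · have hO' := hO
          simp only [hout, if_neg hc1, if_pos hc2] at hO'
          rw [← hσ] at hO'
          exact left_eq_mul.mp hO'.symm
      have hm1 : m = 1 := by
        have h0' : rv ⟨0, hm⟩ = (⟨0, hm⟩ : Fin m) := by rw [hrveq]; rfl
        have : (Fin.rev ⟨0, hm⟩ : Fin m).val = 0 := congrArg Fin.val h0'
        rw [Fin.val_rev] at this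
        simp only [Fin.val_mk] at this
        omega
      have key : ∀ (s : S) (x y : V),
          (s : G.Subgraph).Adj x y ↔ (Mf s : G.Subgraph).Adj x y := by
        intro s x y
        rw [hchar s x y, hMchar s x y]
        constructor
        · rintro ⟨i, hi, hp⟩
          have hi0 : i = 0 := by omega
          subst hi0
          exact ⟨0, by omega, by simpa using hp⟩
        · rintro ⟨j, hj, hp⟩
          have hj0 : j = 0 := by omega
          subst hj0
          exact ⟨0, by omega, by simpa using hp⟩
      apply Subtype.ext
      apply SimpleGraph.Subgraph.ext
      · rw [hverts s₁, hverts s₂, ← hMverts s₁, ← hMverts s₂, hMv]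
      · funext x y
        apply propext
        rw [key s₁ x y, key s₂ x y, hMv]
  rw [copyCount_eq_natCard, copyCount_eq_natCard, ← hS, ← hT]
  calc Nat.card S
      ≤ Nat.card (T × Equiv.Perm (Fin m)) := Nat.card_le_card_of_injective F hF
    _ = Nat.card T * Nat.card (Equiv.Perm (Fin m)) := Nat.card_prod _ _
    _ = Nat.card T * m.factorial := by
        have hcp : Nat.card (Equiv.Perm (Fin m)) = m.factorial := by
          rw [Nat.card_eq_fintype_card, Fintype.card_perm, Fintype.card_fin]
        rw [hcp]
    _ = m.factorial * Nat.card T := Nat.mul_comm _ _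

end Stmt7Aux

/-- For even `l > 0` and `F` the matching with `l/2` edges:
`ex(n,e,P_l,K₃) ≤ (l/2)! * ex(n,e,F,K₃)`, and every finite triangle-free graph `G`
satisfies `N(P_l, G) ≤ (l/2)! * N(F, G)`. -/
theorem stmt7 (l : ℕ) (hl : 0 < l) (hev : Even l) :
    (∀ n e : ℕ,
      exTriFree n e (pathGraph l) ≤ (l / 2).factorial * exTriFree n e (matchingGraph (l / 2))) ∧
    ∀ {V : Type*} [Fintype V] (G : SimpleGraph V), G.CliqueFree 3 →
      subgraphCopyCount (pathGraph l) G ≤ (l / 2).factorial * subgraphCopyCount (matchingGraph (l / 2)) G := by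
    classical
  obtain ⟨r, hr⟩ := hev
  obtain ⟨m, hm, hlm⟩ : ∃ m, 0 < m ∧ l = 2 * m := ⟨l / 2, by omega, by omega⟩
  have h2 : l / 2 = m := by omega
  constructor
  · intro n e
    rw [h2]
    have hbddB : BddAbove {N | ∃ G : SimpleGraph (Fin n),
        G.CliqueFree 3 ∧ G.edgeSet.ncard = e ∧ subgraphCopyCount (matchingGraph m) G = N} := by
      refine ⟨Nat.card (Set (Fin n) × Set (Fin n × Fin n)), ?_⟩
      rintro N ⟨G, -, -, rfl⟩
      exact Stmt7Aux.copyCount_le_bound _ _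
    rcases Set.eq_empty_or_nonempty {N | ∃ G : SimpleGraph (Fin n),
        G.CliqueFree 3 ∧ G.edgeSet.ncard = e ∧ subgraphCopyCount (pathGraph l) G = N} with hA | hA
    · show sSup {N | ∃ G : SimpleGraph (Fin n),
        G.CliqueFree 3 ∧ G.edgeSet.ncard = e ∧ subgraphCopyCount (pathGraph l) G = N} ≤ _
      rw [hA, csSup_empty]
      exact Nat.zero_le _
    · refine csSup_le hA ?_
      rintro N ⟨G, hcf, hedge, rfl⟩
      have h1 := Stmt7Aux.core G hcf m hm
      rw [← hlm] at h1
      refine le_trans h1 ?_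
      refine Nat.mul_le_mul_left _ ?_
      exact le_csSup hbddB ⟨G, hcf, hedge, rfl⟩
  · intro V _ G hG
    rw [h2, hlm]
    exact Stmt7Aux.core G hG m hm
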